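/- Let Q = T[H_1, …, H_t] be a strong semicomplete composition and let k ≥ 4 be an integer. Then Q has a k-kernel if and only if there is a vertex v ∈ V(Q), say v ∈ V(H_i) for some i ∈ [t], such that {v} is a (k−1)-absorbent set of the digraph Q − (V(H_i) ∖ {v}). -/

import Mathlib

universe u v

/-- There is a directed walk of length at most `n` from `x` to `y`. -/
def ReachIn {V : Type u} (A : V → V → Prop) : ℕ → V → V → Prop
  | 0 => fun x y => x = y
  | n + 1 => fun x y => x = y ∨ ∃ z, A x z ∧ ReachIn A n z y

/-- A digraph is strong if every vertex can reach every other vertex. -/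
def IsStrong {V : Type u} (A : V → V → Prop) : Prop :=
  ∀ x y : V, Relation.ReflTransGen A x y

/-- A digraph is loopless if it has no loops. -/
def Loopless {V : Type u} (A : V → V → Prop) : Prop := ∀ x, ¬ A x x

/-- A digraph is semicomplete if there is at least one arc between any two distinct vertices. -/
def Semicomplete {V : Type u} (A : V → V → Prop) : Prop :=
  ∀ x y : V, x ≠ y → A x y ∨ A y x

/-- The subdigraph induced on a set `s` of vertices. -/
def Restrict {V : Type u} (A : V → V → Prop) (s : Set V) :
    {v // v ∈ s} → {v // v ∈ s} → Prop := fun x y => A x.1 y.1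

/-- `S` is a separator: deleting `S` leaves a non-strong digraph. -/
def IsSeparator {V : Type u} (A : V → V → Prop) (S : Set V) : Prop :=
  ¬ IsStrong (Restrict A Sᶜ)

/-- A digraph is `k`-strong-connected if every separator has at least `k` vertices. -/
def KStrong {V : Type u} (A : V → V → Prop) (k : ℕ) : Prop :=
  ∀ S : Set V, IsSeparator A S → k ≤ S.ncard

/-- The composition `T[H₁, …, H_t]`. -/
def Comp {t : ℕ} (T : Fin t → Fin t → Prop) (V : Fin t → Type u)
    (H : ∀ i, V i → V i → Prop) : (Σ i, V i) → (Σ i, V i) → Prop :=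
  fun p q => T p.1 q.1 ∨ ∃ h : p.1 = q.1, H q.1 (h ▸ p.2) q.2

/-- The complement of the underlying (simple) graph of a digraph. -/
def complUnderlying {V : Type u} (A : V → V → Prop) : SimpleGraph V where
  Adj x y := x ≠ y ∧ ¬ A x y ∧ ¬ A y x
  symm := ⟨fun x y ⟨h1, h2, h3⟩ => ⟨h1.symm, h3, h2⟩⟩
  loopless := ⟨fun x h => h.1 rfl⟩

/-- `x` is a `k`-king: it reaches every vertex by a path of length at most `k`. -/
def IsKKing {V : Type u} (A : V → V → Prop) (k : ℕ) (x : V) : Prop :=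
  ∀ y, ReachIn A k x y

/-- A (directed) path given as a list of vertices. -/
def IsPathList {V : Type u} (A : V → V → Prop) (l : List V) : Prop :=
  l.Nodup ∧ l.Chain' A

/-- A (directed) cycle given as a list of distinct vertices. -/
def IsCycleList {V : Type u} (A : V → V → Prop) (l : List V) : Prop :=
  2 ≤ l.length ∧ l.Nodup ∧ l.Chain' A ∧
    ∀ x ∈ l.getLast?, ∀ y ∈ l.head?, A x y


/-- A set `K` is `ℓ`-absorbent if every vertex outside `K` reaches some vertex of `K`
by a path of length at most `ℓ`. -/
def IsAbsorbent {V : Type u} (A : V → V → Prop) (ℓ : ℕ) (K : Set V) : Prop :=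
  ∀ x ∉ K, ∃ y ∈ K, ReachIn A ℓ x y

/-- A set `K` is `k`-independent if any two distinct vertices of `K` are at distance
at least `k` in both directions. -/
def IsKIndependent {V : Type u} (A : V → V → Prop) (k : ℕ) (K : Set V) : Prop :=
  ∀ x ∈ K, ∀ y ∈ K, x ≠ y → ¬ ReachIn A (k - 1) x y

/-- A `k`-kernel is a `k`-independent and `(k-1)`-absorbent set. -/
def IsKKernel {V : Type u} (A : V → V → Prop) (k : ℕ) (K : Set V) : Prop :=
  IsKIndependent A k K ∧ IsAbsorbent A (k - 1) K

/-!
In a strong semicomplete composition with at least two parts, every vertex `u_i` of `T` lies on a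
closed walk of length 2 or 3: otherwise `u_i` together with its out-neighbours would be closed
under arcs, yet by strong connectivity it contains an in-neighbour of `u_i`. Lifting that walk
shows that two vertices of the same part are within distance 3 of each other, and two vertices of
different parts are adjacent in at least one direction. Hence for `k ≥ 4` a `k`-kernel is a single
vertex `v ∈ V(H_i)`, and `{v}` is `(k-1)`-absorbent exactly when the vertices outside `H_i` reach
`v`: a path from such a vertex to `v` can be cut at its first entry into `H_i` and redirected to
`v`, since arcs between distinct parts only depend on the parts.
-/

namespace ReachIn

variable {V : Type u} {A : V → V → Prop}

theorem refl : ∀ (n : ℕ) (x : V), ReachIn A n x x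
  | 0, _ => rfl
  | _ + 1, _ => Or.inl rfl

theorem mono {n m : ℕ} {x y : V} (h : ReachIn A n x y) (hnm : n ≤ m) : ReachIn A m x y :=
  match n, m, h with
  | 0, m, h => (show x = y from h) ▸ refl m x
  | _ + 1, 0, _ => absurd hnm (by omega)
  | _ + 1, _ + 1, .inl hxy => .inl hxy
  | _ + 1, _ + 1, .inr ⟨z, hxz, hz⟩ => .inr ⟨z, hxz, mono hz (by omega)⟩

theorem of_adj {n : ℕ} {x y : V} (h : A x y) : ReachIn A (n + 1) x y :=
  .inr ⟨y, h, refl n y⟩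

theorem of_restrict {s : Set V} {n : ℕ} {x y : {v // v ∈ s}}
    (h : ReachIn (Restrict A s) n x y) : ReachIn A n x.1 y.1 :=
  match n, x, h with
  | 0, _, hxy => show _ = _ from congrArg Subtype.val hxy
  | _ + 1, _, .inl hxy => .inl (congrArg Subtype.val hxy)
  | _ + 1, _, .inr ⟨z, hxz, hz⟩ => .inr ⟨z.1, hxz, of_restrict hz⟩

theorem restrict_of_redirect {P : Set V} {v : V}
    (hredirect : ∀ x z, x ∉ P → z ∈ P → A x z → A x v) :
    ∀ {n : ℕ} {x : V} (hx : x ∉ P), ReachIn A n x v →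
      ReachIn (Restrict A {p | p ∉ P ∨ p = v}) n ⟨x, Or.inl hx⟩ ⟨v, Or.inr rfl⟩
  | 0, _, _, hxv => Subtype.ext hxv
  | _ + 1, _, _, .inl hxv => .inl (Subtype.ext hxv)
  | n + 1, x, hx, .inr ⟨z, hxz, hz⟩ => by
    by_cases hzP : z ∈ P
    · exact of_adj (A := Restrict A _) (hredirect x z hx hzP hxz)
    · exact .inr ⟨⟨z, Or.inl hzP⟩, hxz, restrict_of_redirect hredirect hzP hz⟩

end ReachIn

section Kernels

variable {V : Type u} {A : V → V → Prop} {k : ℕ} {K : Set V}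

theorem IsKIndependent.subsingleton {n : ℕ} (hnk : n < k)
    (htotal : ∀ x y, ReachIn A n x y ∨ ReachIn A n y x) (hK : IsKIndependent A k K) :
    K.Subsingleton := by
  intro x hx y hy
  by_contra hne
  rcases htotal x y with h | h
  · exact hK x hx y hy hne (h.mono (by omega))
  · exact hK y hy x hx (Ne.symm hne) (h.mono (by omega))

theorem isKIndependent_of_subsingleton (hK : K.Subsingleton) : IsKIndependent A k K :=
  fun _ hx _ hy hne => absurd (hK hx hy) hne

theorem IsAbsorbent.nonempty [Nonempty V] {ℓ : ℕ} (h : IsAbsorbent A ℓ K) : K.Nonempty := by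
  by_contra hK
  obtain ⟨y, hy, -⟩ := h (Classical.arbitrary V) fun hx => hK ⟨_, hx⟩
  exact hK ⟨y, hy⟩

theorem isAbsorbent_singleton_iff_restrict {ℓ : ℕ} {P : Set V} {v : V}
    (hP : ∀ x ∈ P, ReachIn A ℓ x v) (hredirect : ∀ x z, x ∉ P → z ∈ P → A x z → A x v) :
    IsAbsorbent A ℓ {v} ↔ IsAbsorbent (Restrict A {p | p ∉ P ∨ p = v}) ℓ {x | x.1 = v} := by
  constructor
  · rintro habs ⟨x, hxP | rfl⟩ hxv
    · obtain ⟨_, rfl, hxv'⟩ := habs x hxv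
      exact ⟨_, rfl, ReachIn.restrict_of_redirect hredirect hxP hxv'⟩
    · exact absurd rfl hxv
  · intro habs x hxv
    by_cases hxP : x ∈ P
    · exact ⟨v, rfl, hP x hxP⟩
    · obtain ⟨y, hy, hxy⟩ := habs ⟨x, Or.inl hxP⟩ hxv
      exact ⟨v, rfl, hy ▸ hxy.of_restrict⟩

end Kernels

theorem Semicomplete.exists_cycle_two_or_three {α : Type*} [Nontrivial α] {T : α → α → Prop}
    (hsc : Semicomplete T) (hT : IsStrong T) (i : α) :
    (∃ j, T i j ∧ T j i) ∨ ∃ j l, T i j ∧ T j l ∧ T l i := by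
  by_contra! h
  obtain ⟨no_two, no_three⟩ := h
  have closed : ∀ z, Relation.ReflTransGen T i z → z = i ∨ T i z := by
    intro z hz
    induction hz with
    | refl => exact .inl rfl
    | @tail b c _ hbc ih =>
      rcases ih with rfl | hib
      · exact .inr hbc
      · by_cases hci : c = i
        · exact .inl hci
        · exact .inr ((hsc i c (Ne.symm hci)).resolve_right (no_three b c hib hbc))
  obtain ⟨j, hji⟩ := exists_ne i
  obtain ⟨p, -, hpi⟩ := ((hT j i).cases_tail).resolve_left (Ne.symm hji)
  rcases closed p (hT i p) with rfl | hip
  · exact no_two p hpi hpi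
  · exact no_two p hip hpi

section Composition

variable {t : ℕ} {T : Fin t → Fin t → Prop} {V : Fin t → Type u} {H : ∀ i, V i → V i → Prop}

theorem Comp.reflTransGen_fst {x y : Σ i, V i} (h : Relation.ReflTransGen (Comp T V H) x y) :
    Relation.ReflTransGen T x.1 y.1 := by
  induction h with
  | refl => exact .refl
  | tail _ hbc ih =>
    rcases hbc with hT | ⟨he, _⟩
    · exact ih.tail hT
    · rwa [he] at ih

theorem IsStrong.of_comp [∀ i, Nonempty (V i)] (h : IsStrong (Comp T V H)) : IsStrong T :=
  fun a b => Comp.reflTransGen_fst (h ⟨a, Classical.arbitrary _⟩ ⟨b, Classical.arbitrary _⟩)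

theorem Comp.adj_mk_of_adj {i : Fin t} {x z : Σ j, V j} (hx : x.1 ≠ i) (hz : z.1 = i)
    (h : Comp T V H x z) (v : V i) : Comp T V H x ⟨i, v⟩ := by
  rcases h with hT | ⟨he, _⟩
  · exact .inl (hz ▸ hT)
  · exact absurd (he.trans hz) hx

theorem Comp.reachIn_three_of_fst_eq [∀ i, Nonempty (V i)] (ht : 2 ≤ t) (hsc : Semicomplete T)
    (hT : IsStrong T) {x y : Σ i, V i} (hxy : x.1 = y.1) : ReachIn (Comp T V H) 3 x y := by
  obtain ⟨i, x⟩ := x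
  obtain ⟨_, y⟩ := y
  subst hxy
  have : Nontrivial (Fin t) := Fin.nontrivial_iff_two_le.mpr ht
  rcases hsc.exists_cycle_two_or_three hT i with ⟨j, hij, hji⟩ | ⟨j, l, hij, hjl, hli⟩
  · exact .inr ⟨⟨j, Classical.arbitrary _⟩, .inl hij, .of_adj (.inl hji)⟩
  · exact .inr ⟨⟨j, Classical.arbitrary _⟩, .inl hij,
      .inr ⟨⟨l, Classical.arbitrary _⟩, .inl hjl, .of_adj (.inl hli)⟩⟩

theorem Comp.reachIn_three_or [∀ i, Nonempty (V i)] (ht : 2 ≤ t) (hsc : Semicomplete T)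
    (hT : IsStrong T) (x y : Σ i, V i) :
    ReachIn (Comp T V H) 3 x y ∨ ReachIn (Comp T V H) 3 y x := by
  by_cases hxy : x.1 = y.1
  · exact .inl (reachIn_three_of_fst_eq ht hsc hT hxy)
  · rcases hsc x.1 y.1 hxy with h | h
    · exact .inl (.of_adj (.inl h))
    · exact .inr (.of_adj (.inl h))

end Composition

theorem stmt10_general {t : ℕ} (ht : 2 ≤ t) (V : Fin t → Type u)
    [∀ i, Nonempty (V i)] (T : Fin t → Fin t → Prop) (H : ∀ i, V i → V i → Prop)
    (hsc : Semicomplete T)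
    (hstrong : IsStrong (Comp T V H)) (k : ℕ) (hk : 4 ≤ k) :
    (∃ K : Set (Σ i, V i), IsKKernel (Comp T V H) k K) ↔
      ∃ (i : Fin t) (v : V i),
        IsAbsorbent (Restrict (Comp T V H) {p : Σ j, V j | p.1 ≠ i ∨ p = ⟨i, v⟩})
          (k - 1) {x | x.1 = (⟨i, v⟩ : Σ j, V j)} := by
  have hT : IsStrong T := hstrong.of_comp
  have hsame (i : Fin t) (v : V i) (x : Σ j, V j) (hx : x.1 = i) :
      ReachIn (Comp T V H) (k - 1) x ⟨i, v⟩ :=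
    (Comp.reachIn_three_of_fst_eq ht hsc hT hx).mono (by omega)
  have habs_iff (i : Fin t) (v : V i) :=
    isAbsorbent_singleton_iff_restrict (P := {p : Σ j, V j | p.1 = i}) (hsame i v)
      fun _ _ hx hz hxz => Comp.adj_mk_of_adj hx hz hxz v
  constructor
  · rintro ⟨K, hind, habs⟩
    have : Nonempty (Σ i, V i) := ⟨⟨⟨0, by omega⟩, Classical.arbitrary _⟩⟩
    obtain ⟨⟨i, v⟩, hw⟩ := habs.nonempty
    have hK : K = {⟨i, v⟩} :=
      (hind.subsingleton (by omega) (Comp.reachIn_three_or ht hsc hT)).eq_singleton_of_mem hw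
    exact ⟨i, v, (habs_iff i v).1 (hK ▸ habs)⟩
  · rintro ⟨i, v, habs⟩
    exact ⟨{⟨i, v⟩}, isKIndependent_of_subsingleton Set.subsingleton_singleton,
      (habs_iff i v).2 habs⟩

/-- For `k ≥ 4`, a strong semicomplete composition `Q` has a `k`-kernel iff
there are `i` and `v ∈ V(H_i)` such that `{v}` is a `(k-1)`-absorbent set of
`Q - (V(H_i) \ {v})`. -/
theorem stmt10 {t : ℕ} (ht : 2 ≤ t) (V : Fin t → Type u) [∀ i, Fintype (V i)]
    [∀ i, Nonempty (V i)] (T : Fin t → Fin t → Prop) (H : ∀ i, V i → V i → Prop)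
    (hTl : Loopless T) (hHl : ∀ i, Loopless (H i)) (hsc : Semicomplete T)
    (hstrong : IsStrong (Comp T V H)) (k : ℕ) (hk : 4 ≤ k) :
    (∃ K : Set (Σ i, V i), IsKKernel (Comp T V H) k K) ↔
      ∃ (i : Fin t) (v : V i),
        IsAbsorbent (Restrict (Comp T V H) {p : Σ j, V j | p.1 ≠ i ∨ p = ⟨i, v⟩})
          (k - 1) {x | x.1 = (⟨i, v⟩ : Σ j, V j)} :=
  stmt10_general ht V T H hsc hstrong k hk
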